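/- Let ψ be a generalized Kracht formula (with exactly one free variable) that begins with an existential restricted quantifier. Then ψ is equivalent (in every Kripke frame, under every assignment of its free variable, with atoms read via the # translation) to a quantifier-free formula built from atoms x_l ∈ E' with E' quasi-safe, using only ∧ and ∨. -/

import Mathlib

set_option autoImplicit true

universe u v w

/-- Modal formulas over modality indices `Λ` and propositional variables `V`. -/
inductive MF (Λ : Type u) (V : Type v) : Type (max u v)
  | var : V → MF Λ V
  | top : MF Λ V
  | bot : MF Λ V
  | and : MF Λ V → MF Λ V → MF Λ V
  | or  : MF Λ V → MF Λ V → MF Λ V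
  | neg : MF Λ V → MF Λ V
  | imp : MF Λ V → MF Λ V → MF Λ V
  | dia : Λ → MF Λ V → MF Λ V
  | box : Λ → MF Λ V → MF Λ V

namespace MF
variable {Λ : Type u} {V : Type v}

/-- The set of propositional variables occurring in a modal formula. -/
def vars : MF Λ V → Set V
  | var p => {p}
  | top => ∅
  | bot => ∅
  | and a b => vars a ∪ vars b
  | or a b => vars a ∪ vars b
  | neg a => vars a
  | imp a b => vars a ∪ vars b
  | dia _ a => vars a
  | box _ a => vars a

end MF

/-- Positive modal formulas: built without `¬` and `→`. -/
inductive Positive {Λ : Type u} {V : Type v} : MF Λ V → Prop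
  | var (p : V) : Positive (.var p)
  | top : Positive .top
  | bot : Positive .bot
  | and {a b} : Positive a → Positive b → Positive (.and a b)
  | or {a b} : Positive a → Positive b → Positive (.or a b)
  | dia (l) {a} : Positive a → Positive (.dia l a)
  | box (l) {a} : Positive a → Positive (.box l a)

/-- A Kripke frame with accessibility relations indexed by `Λ`. -/
structure Frame (Λ : Type u) where
  W : Type w
  R : Λ → W → W → Prop

/-- Kripke satisfaction `F, x, θ ⊨ φ`. -/
def sat {Λ : Type u} {V : Type v} (F : Frame Λ) (θ : V → Set F.W) : F.W → MF Λ V → Prop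
  | x, .var p => x ∈ θ p
  | _, .top => True
  | _, .bot => False
  | x, .and a b => sat F θ x a ∧ sat F θ x b
  | x, .or a b => sat F θ x a ∨ sat F θ x b
  | x, .neg a => ¬ sat F θ x a
  | x, .imp a b => sat F θ x a → sat F θ x b
  | x, .dia l a => ∃ y, F.R l x y ∧ sat F θ y a
  | x, .box l a => ∀ y, F.R l x y → sat F θ y a

/-- `BoxF φ p S`: `φ` is a box-formula with head `p`, in which the set of variables
occurring not as the head is `S`. -/
inductive BoxF {Λ : Type u} {V : Type v} : MF Λ V → V → Set V → Prop
  | var (p : V) : BoxF (.var p) p ∅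
  | imp {POS ψ p S} : Positive POS → BoxF ψ p S → BoxF (.imp POS ψ) p (MF.vars POS ∪ S)
  | box (l) {ψ p S} : BoxF ψ p S → BoxF (.box l ψ) p S

/-- `RegBF r φ p`: relative to the rank assignment `r`, `φ` is a regular box-formula
with head `p` (of rank `r p`): all variables of the positive antecedents have rank `< r p`. -/
inductive RegBF {Λ : Type u} {V : Type v} (r : V → ℕ) : MF Λ V → V → Prop
  | var (p : V) : RegBF r (.var p) p
  | imp {POS ψ p} : Positive POS → (∀ q ∈ MF.vars POS, r q < r p) →
      RegBF r ψ p → RegBF r (.imp POS ψ) p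
  | box (l) {ψ p} : RegBF r ψ p → RegBF r (.box l ψ) p

/-- The edge relation of the dependency graph of a set `A` of box-formulas:
`p → q` iff `p` occurs (not as the head) in some member of `A` with head `q`. -/
def depEdge {Λ : Type u} {V : Type v} (A : Set (MF Λ V)) (p q : V) : Prop :=
  ∃ φ ∈ A, ∃ S, BoxF φ q S ∧ p ∈ S

/-- A set of box-formulas is regular if its dependency graph has no oriented cycle. -/
def RegularSet {Λ : Type u} {V : Type v} (A : Set (MF Λ V)) : Prop :=
  ∀ p : V, ¬ Relation.TransGen (depEdge A) p p

/-- `R_λ^{-1}(A) = {u : ∃ v, u R_λ v ∧ v ∈ A}`. -/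
def Rinv {Λ : Type u} (F : Frame Λ) (l : Λ) (A : Set F.W) : Set F.W :=
  {u | ∃ v, F.R l u v ∧ v ∈ A}

/-- `R_λ^□(A) = {u : ∀ v, u R_λ v → v ∈ A}`. -/
def RboxOp {Λ : Type u} (F : Frame Λ) (l : Λ) (A : Set F.W) : Set F.W :=
  {u | ∀ v, F.R l u v → v ∈ A}

/-- `R_λ(A) = {u : ∃ v, v R_λ u ∧ v ∈ A}`. -/
def Rfwd {Λ : Type u} (F : Frame Λ) (l : Λ) (A : Set F.W) : Set F.W :=
  {u | ∃ v, F.R l v u ∧ v ∈ A}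

/-- The interpretation of the expression `KP^{POS}` in a frame `F`, the set variables
`P^l_i` being interpreted by `P`.  (Junk value `∅` on non-positive constructors.) -/
def KPsem {Λ : Type u} (F : Frame Λ) (P : ℕ × ℕ → Set F.W) : MF Λ (ℕ × ℕ) → Set F.W
  | .var q => P q
  | .top => Set.univ
  | .bot => ∅
  | .and a b => KPsem F P a ∩ KPsem F P b
  | .or a b => KPsem F P a ∪ KPsem F P b
  | .dia l a => Rinv F l (KPsem F P a)
  | .box l a => RboxOp F l (KPsem F P a)
  | .neg _ => ∅
  | .imp _ _ => ∅

/-- The interpretation of the expression `KV^φ` in a frame `F`: the set variables `P^l_i`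
are interpreted by `P` and the extra variable `#` by the second argument.
(Junk value `∅` on constructors that do not occur in regular box-formulas.) -/
def KVsem {Λ : Type u} (F : Frame Λ) (P : ℕ × ℕ → Set F.W) : MF Λ (ℕ × ℕ) → Set F.W → Set F.W
  | .var _, X => X
  | .imp POS ψ, X => KVsem F P ψ (X ∩ KPsem F P POS)
  | .box l ψ, X => KVsem F P ψ (Rfwd F l X)
  | _, _ => ∅

/-- The semantic minimal valuation: given points `g j` and sets `f j` of regular
box-formulas to be verified at `g j`, `thetaMinSem F g f k i` is the minimal value of the
variable `p^k_i`; it is defined by recursion on the rank `k` as the union, over all `j` and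
all `φ ∈ f j` with head `p^k_i`, of `KV^φ(g j)` computed with the minimal values of the
variables of lower rank. -/
noncomputable def thetaMinSem {Λ : Type u} (F : Frame Λ) {ι : Type w} (g : ι → F.W)
    (f : ι → Set (MF Λ (ℕ × ℕ))) : ℕ → ℕ → Set F.W :=
  fun k => Nat.strongRecOn (motive := fun _ => ℕ → Set F.W) k fun k ih i =>
    ⋃ (j : ι), ⋃ φ ∈ f j, ⋃ (_ : RegBF Prod.fst φ (k, i)),
      KVsem F (fun q => if h : q.1 < k then ih q.1 h q.2 else ∅) φ {g j}

/-- `L`-expressions: terms of the language `L` with individual variables `x_i` (`i : ℕ`),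
constants `⊤, ⊥`, unary `R_λ^{-1}`, `R_λ^□`, `R_λ` and binary `∩`, `∪`. -/
inductive LExp (Λ : Type u) : Type u
  | var : ℕ → LExp Λ
  | top : LExp Λ
  | bot : LExp Λ
  | inter : LExp Λ → LExp Λ → LExp Λ
  | union : LExp Λ → LExp Λ → LExp Λ
  | rinv : Λ → LExp Λ → LExp Λ
  | rbox : Λ → LExp Λ → LExp Λ
  | rfw : Λ → LExp Λ → LExp Λ

namespace LExp
variable {Λ : Type u}

/-- Denotation of an `L`-expression in a frame `F`, the variable `x_i` denoting the
singleton of the point `g i`. -/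
def den (F : Frame Λ) (g : ℕ → F.W) : LExp Λ → Set F.W
  | var i => {g i}
  | top => Set.univ
  | bot => ∅
  | inter a b => den F g a ∩ den F g b
  | union a b => den F g a ∪ den F g b
  | rinv l a => Rinv F l (den F g a)
  | rbox l a => RboxOp F l (den F g a)
  | rfw l a => Rfwd F l (den F g a)

/-- The set of (indices of) individual variables occurring in an `L`-expression. -/
def evars : LExp Λ → Set ℕ
  | var i => {i}
  | top => ∅
  | bot => ∅
  | inter a b => evars a ∪ evars b
  | union a b => evars a ∪ evars b
  | rinv _ a => evars a
  | rbox _ a => evars a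
  | rfw _ a => evars a

end LExp

/-- The subexpression relation on `L`-expressions. -/
inductive Subexp {Λ : Type u} : LExp Λ → LExp Λ → Prop
  | refl (e : LExp Λ) : Subexp e e
  | interL {e a b} : Subexp e a → Subexp e (.inter a b)
  | interR {e a b} : Subexp e b → Subexp e (.inter a b)
  | unionL {e a b} : Subexp e a → Subexp e (.union a b)
  | unionR {e a b} : Subexp e b → Subexp e (.union a b)
  | rinv (l) {e a} : Subexp e a → Subexp e (.rinv l a)
  | rbox (l) {e a} : Subexp e a → Subexp e (.rbox l a)
  | rfw (l) {e a} : Subexp e a → Subexp e (.rfw l a)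

/-- `SafeFor e`: `e` is "safe for" the ambient expression, i.e. `e` is a variable, or
`R_λ(e')` with `e'` safe for it, or an intersection one of whose components is safe for it. -/
inductive SafeFor {Λ : Type u} : LExp Λ → Prop
  | var (i : ℕ) : SafeFor (.var i)
  | rfw (l) {a} : SafeFor a → SafeFor (.rfw l a)
  | interL {a b} : SafeFor a → SafeFor (.inter a b)
  | interR {a b} : SafeFor b → SafeFor (.inter a b)

/-- An `L`-expression is safe if it is safe for itself and the argument of every
subexpression of the form `R_λ(ψ)` is safe for it. -/
def Safe {Λ : Type u} (e : LExp Λ) : Prop :=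
  SafeFor e ∧ ∀ l a, Subexp (.rfw l a) e → SafeFor a

mutual
  /-- The class `K`: the least class of `L`-expressions containing the variables and closed
  under `S ↦ R_λ(S)` and `S ↦ S ∩ E` for `E` a positive combination of members of `K`. -/
  inductive InK {Λ : Type u} : LExp Λ → Prop
    | var (i : ℕ) : InK (.var i)
    | rfw (l : Λ) {S : LExp Λ} : InK S → InK (.rfw l S)
    | inter {S E : LExp Λ} : InK S → PosOfK E → InK (.inter S E)
  /-- Positive combinations of members of `K`: built from members of `K` using only
  `∩`, `∪`, `R_λ^{-1}`, `R_λ^□`, `⊤`, `⊥`. -/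
  inductive PosOfK {Λ : Type u} : LExp Λ → Prop
    | ofK {e : LExp Λ} : InK e → PosOfK e
    | top : PosOfK .top
    | bot : PosOfK .bot
    | inter {a b} : PosOfK a → PosOfK b → PosOfK (.inter a b)
    | union {a b} : PosOfK a → PosOfK b → PosOfK (.union a b)
    | rinv (l) {a} : PosOfK a → PosOfK (.rinv l a)
    | rbox (l) {a} : PosOfK a → PosOfK (.rbox l a)
end

/-- Quasi-safe `L`-expressions: positive combinations of safe expressions, i.e. built from
safe expressions using only `∩`, `∪`, `R_λ^{-1}`, `R_λ^□`, `⊤`, `⊥`. -/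
inductive QuasiSafe {Λ : Type u} : LExp Λ → Prop
  | safe {e : LExp Λ} : Safe e → QuasiSafe e
  | top : QuasiSafe .top
  | bot : QuasiSafe .bot
  | inter {a b} : QuasiSafe a → QuasiSafe b → QuasiSafe (.inter a b)
  | union {a b} : QuasiSafe a → QuasiSafe b → QuasiSafe (.union a b)
  | rinv (l) {a} : QuasiSafe a → QuasiSafe (.rinv l a)
  | rbox (l) {a} : QuasiSafe a → QuasiSafe (.rbox l a)

/-- `ReplOne i ψ φ φ'`: `φ'` is the result of replacing one occurrence of the variable
`x_i` in `φ` by `ψ`. -/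
inductive ReplOne {Λ : Type u} (i : ℕ) (ψ : LExp Λ) : LExp Λ → LExp Λ → Prop
  | here : ReplOne i ψ (.var i) ψ
  | interL {a a' b} : ReplOne i ψ a a' → ReplOne i ψ (.inter a b) (.inter a' b)
  | interR {a b b'} : ReplOne i ψ b b' → ReplOne i ψ (.inter a b) (.inter a b')
  | unionL {a a' b} : ReplOne i ψ a a' → ReplOne i ψ (.union a b) (.union a' b)
  | unionR {a b b'} : ReplOne i ψ b b' → ReplOne i ψ (.union a b) (.union a b')
  | rinv (l) {a a'} : ReplOne i ψ a a' → ReplOne i ψ (.rinv l a) (.rinv l a')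
  | rbox (l) {a a'} : ReplOne i ψ a a' → ReplOne i ψ (.rbox l a) (.rbox l a')
  | rfw (l) {a a'} : ReplOne i ψ a a' → ReplOne i ψ (.rfw l a) (.rfw l a')

/-- A finite union of `L`-expressions (empty union is `⊥`). -/
def unionList {Λ : Type u} : List (LExp Λ) → LExp Λ
  | [] => .bot
  | e :: es => .union e (unionList es)

/-- `UnionOfSafe e`: `e` is a finite union of safe expressions. -/
inductive UnionOfSafe {Λ : Type u} : LExp Λ → Prop
  | bot : UnionOfSafe .bot
  | safe {e : LExp Λ} : Safe e → UnionOfSafe e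
  | union {a b} : UnionOfSafe a → UnionOfSafe b → UnionOfSafe (.union a b)

/-- Syntactic `KP^{POS}`: the `L`-expression obtained from the positive formula `POS` by
replacing each set variable `P^l_i` by the `L`-expression `KF (l, i)`.
(Junk value on non-positive constructors.) -/
def KPsub {Λ : Type u} (KF : ℕ × ℕ → LExp Λ) : MF Λ (ℕ × ℕ) → LExp Λ
  | .var q => KF q
  | .top => .top
  | .bot => .bot
  | .and a b => .inter (KPsub KF a) (KPsub KF b)
  | .or a b => .union (KPsub KF a) (KPsub KF b)
  | .dia l a => .rinv l (KPsub KF a)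
  | .box l a => .rbox l (KPsub KF a)
  | .neg _ => .bot
  | .imp _ _ => .bot

/-- Syntactic `KVF^φ(t)`: the `L`-expression obtained from `KV^φ` by substituting the
`L`-expression `t` for `#` and `KF (l, i)` for each set variable `P^l_i`.
(Junk value on constructors that do not occur in regular box-formulas.) -/
def KVFsyn {Λ : Type u} (KF : ℕ × ℕ → LExp Λ) : MF Λ (ℕ × ℕ) → LExp Λ → LExp Λ
  | .var _, t => t
  | .imp POS ψ, t => KVFsyn KF ψ (.inter t (KPsub KF POS))
  | .box l ψ, t => KVFsyn KF ψ (.rfw l t)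
  | _, _ => .bot

open scoped Classical in
/-- The syntactic minimal valuation `KF_f^{p^k_i}` for variables `x_0, …, x_{n-1}` and
`f` assigning to each variable a finite set of regular box-formulas: defined by recursion on
the rank `k` as the union, over all `j < n` and all `φ ∈ f j` with head `p^k_i`, of
`KVF_f^φ(x_j)`, which is `KV^φ` with `x_j` substituted for `#` and `KF_f^{p^l_m}`
substituted for each `P^l_m` with `l < k`. -/
noncomputable def KFsyn {Λ : Type u} (n : ℕ) (f : ℕ → Finset (MF Λ (ℕ × ℕ))) :
    ℕ → ℕ → LExp Λ :=
  fun k => Nat.strongRecOn (motive := fun _ => ℕ → LExp Λ) k fun k ih i =>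
    unionList (((List.range n).flatMap fun j =>
      ((f j).toList.filter fun φ => decide (RegBF Prod.fst φ (k, i))).map fun φ =>
        KVFsyn (fun q => if h : q.1 < k then ih q.1 h q.2 else LExp.bot) φ (LExp.var j)))

/-- The expressions substituted for the set variables `P^l_m`, `l < k`, in `KVF`:
the syntactic minimal valuations of the lower ranks. -/
noncomputable def lowKF {Λ : Type u} (n : ℕ) (f : ℕ → Finset (MF Λ (ℕ × ℕ))) (k : ℕ) :
    ℕ × ℕ → LExp Λ :=
  fun q => if q.1 < k then KFsyn n f q.1 q.2 else LExp.bot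

/-- `KVFat n f φ j k` is the `L`-expression `KVF_f^φ(x_j)` for `φ` a regular box-formula
of rank `k`. -/
noncomputable def KVFat {Λ : Type u} (n : ℕ) (f : ℕ → Finset (MF Λ (ℕ × ℕ)))
    (φ : MF Λ (ℕ × ℕ)) (j k : ℕ) : LExp Λ :=
  KVFsyn (lowKF n f k) φ (.var j)

/-- A labelled tree-like structure: a set of vertices with relations indexed by `Λ`,
a root, and a label function assigning to every vertex a set of labels from `α`. -/
structure LabTree (Λ : Type u) (α : Type v) where
  V : Type
  R : Λ → V → V → Prop
  root : V
  label : V → Set α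

/-- Derivation trees witnessing that a formula is built from base formulas using only
`∧` and `◇_λ`. -/
inductive BuiltT (Λ : Type u) (V : Type v) : Type (max u v)
  | base : MF Λ V → BuiltT Λ V
  | and : BuiltT Λ V → BuiltT Λ V → BuiltT Λ V
  | dia : Λ → BuiltT Λ V → BuiltT Λ V

/-- The modal formula described by a derivation tree. -/
def BuiltT.formula {Λ : Type u} {V : Type v} : BuiltT Λ V → MF Λ V
  | base φ => φ
  | and a b => .and a.formula b.formula
  | dia l a => .dia l a.formula

/-- The derivation tree uses only base formulas from `A`. -/
def BuiltT.Ok {Λ : Type u} {V : Type v} (A : Set (MF Λ V)) : BuiltT Λ V → Prop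
  | base φ => φ ∈ A
  | and a b => a.Ok A ∧ b.Ok A
  | dia _ a => a.Ok A

/-- Helper for gluing two labelled trees at their roots: the relation on the disjoint sum,
with the edges out of the second root re-attached to the first root. -/
def glueR {Λ : Type u} {W₁ W₂ : Type} (R₁ : Λ → W₁ → W₁ → Prop) (R₂ : Λ → W₂ → W₂ → Prop)
    (r₁ : W₁) (r₂ : W₂) (l : Λ) : W₁ ⊕ W₂ → W₁ ⊕ W₂ → Prop
  | Sum.inl a, Sum.inl b => R₁ l a b
  | Sum.inr a, Sum.inr b => R₂ l a b
  | Sum.inl a, Sum.inr b => a = r₁ ∧ R₂ l r₂ b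
  | Sum.inr _, Sum.inl _ => False

open Classical in
/-- Helper for gluing two labelled trees at their roots: the label function, the glued root
receiving the union of the two root labels. -/
noncomputable def glueLab {α : Type w} {W₁ W₂ : Type} (L₁ : W₁ → Set α) (L₂ : W₂ → Set α)
    (r₁ : W₁) (r₂ : W₂) : W₁ ⊕ W₂ → Set α
  | Sum.inl a => if a = r₁ then L₁ r₁ ∪ L₂ r₂ else L₁ a
  | Sum.inr b => L₂ b

/-- Helper for prefixing a labelled tree with a new root: the relation on `Option W`,
with an `R_{l₀}`-edge from the new root `none` to the old root `r`. -/
def prefR {Λ : Type u} {W : Type} (R : Λ → W → W → Prop) (l₀ : Λ) (r : W) (l : Λ) :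
    Option W → Option W → Prop
  | none, some w => l = l₀ ∧ w = r
  | some a, some b => R l a b
  | _, _ => False

/-- Helper for prefixing a labelled tree with a new root: the label function, the new root
getting the empty label. -/
def prefLab {α : Type w} {W : Type} (L : W → Set α) : Option W → Set α
  | none => ∅
  | some a => L a

/-- The reduced syntactical tree of a formula built from base formulas using `∧` and `◇_λ`:
a single root labelled `{a}` for a base formula `a`; for a conjunction, the two trees
with their roots identified (labels united); for `◇_λ ψ`, a new root with empty label and an
`R_λ`-edge to the root of the tree of `ψ`. -/
noncomputable def TreeOf {Λ : Type u} {V : Type v} : BuiltT Λ V → LabTree Λ (MF Λ V)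
  | .base φ =>
      { V := Unit, R := fun _ _ _ => False, root := (), label := fun _ => {φ} }
  | .and b₁ b₂ =>
      let T₁ := TreeOf b₁
      let T₂ := TreeOf b₂
      { V := {v : T₁.V ⊕ T₂.V // v ≠ Sum.inr T₂.root},
        R := fun l u v => glueR T₁.R T₂.R T₁.root T₂.root l u.1 v.1,
        root := ⟨Sum.inl T₁.root, by exact Sum.inl_ne_inr⟩,
        label := fun v => glueLab T₁.label T₂.label T₁.root T₂.root v.1 }
  | .dia l b =>
      let T := TreeOf b
      { V := Option T.V,
        R := fun l' u v => prefR T.R l T.root l' u v,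
        root := none,
        label := fun v => prefLab T.label v }

/-- Restrictedly positive first-order formulas over the frame language: built from atoms
`y ∈ E` (`E` an `L`-expression) using `∧`, `∨` and the restricted quantifiers
`(∀ y ◁_λ x)` and `(∃ y ◁_λ x)`. -/
inductive KrF (Λ : Type u) : Type u
  | atom : ℕ → LExp Λ → KrF Λ
  | and : KrF Λ → KrF Λ → KrF Λ
  | or : KrF Λ → KrF Λ → KrF Λ
  | all : ℕ → Λ → ℕ → KrF Λ → KrF Λ
  | ex : ℕ → Λ → ℕ → KrF Λ → KrF Λ

namespace KrF
variable {Λ : Type u}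

/-- Truth of a restrictedly positive formula in a frame under an assignment `g` of points to
individual variables; the atom `y ∈ E` is read via the `#`-translation, i.e. as membership
of `g y` in the denotation of `E`. -/
def holds (F : Frame Λ) : (ℕ → F.W) → KrF Λ → Prop
  | g, atom y E => g y ∈ E.den F g
  | g, and a b => holds F g a ∧ holds F g b
  | g, or a b => holds F g a ∨ holds F g b
  | g, all y l x β => ∀ w, F.R l (g x) w → holds F (Function.update g y w) β
  | g, ex y l x β => ∃ w, F.R l (g x) w ∧ holds F (Function.update g y w) β

/-- Free variables. -/
def fv : KrF Λ → Set ℕ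
  | atom y E => insert y E.evars
  | and a b => fv a ∪ fv b
  | or a b => fv a ∪ fv b
  | all y _ x β => insert x (fv β \ {y})
  | ex y _ x β => insert x (fv β \ {y})

/-- Bound variables. -/
def bv : KrF Λ → Set ℕ
  | atom _ _ => ∅
  | and a b => bv a ∪ bv b
  | or a b => bv a ∪ bv b
  | all y _ _ β => insert y (bv β)
  | ex y _ _ β => insert y (bv β)

/-- No two distinct quantifier occurrences bind the same variable. -/
def CleanBound : KrF Λ → Prop
  | atom _ _ => True
  | and a b => CleanBound a ∧ CleanBound b ∧ bv a ∩ bv b = ∅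
  | or a b => CleanBound a ∧ CleanBound b ∧ bv a ∩ bv b = ∅
  | all y _ _ β => CleanBound β ∧ y ∉ bv β
  | ex y _ _ β => CleanBound β ∧ y ∉ bv β

/-- Clean formulas: no variable occurs both free and bound, and no two distinct quantifier
occurrences bind the same variable. -/
def Clean (φ : KrF Λ) : Prop := fv φ ∩ bv φ = ∅ ∧ CleanBound φ

/-- All the `L`-expressions occurring in atoms of the formula satisfy `P`. -/
def AtomsAll (P : LExp Λ → Prop) : KrF Λ → Prop
  | atom _ E => P E
  | and a b => AtomsAll P a ∧ AtomsAll P b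
  | or a b => AtomsAll P a ∧ AtomsAll P b
  | all _ _ _ β => AtomsAll P β
  | ex _ _ _ β => AtomsAll P β

/-- Quantifier-free formulas (built from atoms using only `∧` and `∨`). -/
def QFree : KrF Λ → Prop
  | atom _ _ => True
  | and a b => QFree a ∧ QFree b
  | or a b => QFree a ∧ QFree b
  | all _ _ _ _ => False
  | ex _ _ _ _ => False

/-- Formulas built from atoms using only `∧`, `∨` and restricted universal quantification
(no existential quantifier). -/
def NoEx : KrF Λ → Prop
  | atom _ _ => True
  | and a b => NoEx a ∧ NoEx b
  | or a b => NoEx a ∧ NoEx b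
  | all _ _ _ β => NoEx β
  | ex _ _ _ _ => False

/-- `GKok U e φ`: every variable occurring in an `L`-expression of an atom of `φ` is
inherently universal. Here `U` is the set of variables that are inherently universal so far
(initially the free variables) and `e` records whether we are within the scope of an
existential quantifier. -/
def GKok : Set ℕ → Bool → KrF Λ → Prop
  | U, _, atom _ E => E.evars ⊆ U
  | U, e, and a b => GKok U e a ∧ GKok U e b
  | U, e, or a b => GKok U e a ∧ GKok U e b
  | U, false, all y _ _ β => GKok (insert y U) false β
  | U, true, all _ _ _ β => GKok U true β
  | U, _, ex _ _ _ β => GKok U true β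

end KrF

/-- A generalized Kracht formula with free variables: clean, restrictedly positive with safe
atoms, and in every atom `y ∈ E` all variables of `E` are inherently universal. -/
def IsGenKrachtFV {Λ : Type u} (α : KrF Λ) : Prop :=
  α.Clean ∧ α.AtomsAll Safe ∧ α.GKok α.fv false

/-- A generalized Kracht formula: a generalized Kracht formula with free variables whose
only free variable is `x0`. -/
def IsGenKracht {Λ : Type u} (α : KrF Λ) (x0 : ℕ) : Prop :=
  IsGenKrachtFV α ∧ α.fv = {x0}

/-- Generalized Sahlqvist antecedents: built from regular box-formulas and negative
formulas using only `∧`, `∨`, `◇_λ`. -/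
inductive GSAnt {Λ : Type u} : MF Λ (ℕ × ℕ) → Prop
  | reg {φ p} : RegBF Prod.fst φ p → GSAnt φ
  | neg {φ} : Positive φ → GSAnt (.neg φ)
  | and {a b} : GSAnt a → GSAnt b → GSAnt (.and a b)
  | or {a b} : GSAnt a → GSAnt b → GSAnt (.or a b)
  | dia (l) {a} : GSAnt a → GSAnt (.dia l a)

/-- Generalized Sahlqvist formulas: built from generalized Sahlqvist implications
`GSA → ⊥` by applying boxes and conjunctions, and disjunctions only to formulas without
common propositional variables. -/
inductive GSF {Λ : Type u} : MF Λ (ℕ × ℕ) → Prop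
  | impl {a} : GSAnt a → GSF (.imp a .bot)
  | box (l) {a} : GSF a → GSF (.box l a)
  | and {a b} : GSF a → GSF b → GSF (.and a b)
  | or {a b} : GSF a → GSF b → MF.vars a ∩ MF.vars b = ∅ → GSF (.or a b)

open Classical in
/-- The modal translation `E^T` of a quasi-safe expression: safe subexpressions are
replaced by their associated propositional variables `p_E`, and `∩, ∪, R^{-1}_λ, R^□_λ`
become `∧, ∨, ◇_λ, □_λ`. -/
noncomputable def Etrans {Λ : Type u} (pE : LExp Λ → ℕ × ℕ) : LExp Λ → MF Λ (ℕ × ℕ)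
  | .var i => .var (pE (.var i))
  | .top => .top
  | .bot => .bot
  | .inter a b =>
      if Safe (LExp.inter a b) then .var (pE (.inter a b))
      else .and (Etrans pE a) (Etrans pE b)
  | .union a b =>
      if Safe (LExp.union a b) then .var (pE (.union a b))
      else .or (Etrans pE a) (Etrans pE b)
  | .rinv l a =>
      if Safe (LExp.rinv l a) then .var (pE (.rinv l a)) else .dia l (Etrans pE a)
  | .rbox l a =>
      if Safe (LExp.rbox l a) then .var (pE (.rbox l a)) else .box l (Etrans pE a)
  | .rfw l a => if Safe (LExp.rfw l a) then .var (pE (.rfw l a)) else .bot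

/-- A finite disjunction of modal formulas (empty disjunction is `⊥`). -/
def orList {Λ : Type u} {V : Type v} : List (MF Λ V) → MF Λ V
  | [] => .bot
  | a :: as => .or a (orList as)


/-!
Since `ψ` begins with an existential quantifier, only its free variable `x₀` is inherently
universal, so every atom of `ψ` is `z ∈ E` with `E` mentioning nothing but `x₀`, which `ψ`
never binds. Quantifiers can then be eliminated from the inside out. Put the body in DNF:
`∃ y ◁_λ x` distributes over the disjuncts and turns the atoms `y ∈ E₁, …, y ∈ Eₙ` of a
disjunct into the single atom `x ∈ R_λ^{-1}(E₁ ∩ ⋯ ∩ Eₙ)`. Dually, `∀ y ◁_λ x` acts on the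
clauses of the CNF, turning `y ∈ E₁ ∨ ⋯ ∨ y ∈ Eₙ` into `x ∈ R_λ^□(E₁ ∪ ⋯ ∪ Eₙ)`. The new
expressions are built from the old ones by the operations defining quasi-safety.
-/

namespace LExp

variable {Λ : Type u}

def interList : List (LExp Λ) → LExp Λ
  | [] => .top
  | e :: es => .inter e (interList es)

section Denotation

variable (F : Frame Λ) (g : ℕ → F.W)

@[simp] lemma mem_den_interList (w : F.W) (L : List (LExp Λ)) :
    w ∈ (interList L).den F g ↔ ∀ e ∈ L, w ∈ e.den F g := by
  induction L <;> simp [interList, den, *]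

@[simp] lemma mem_den_unionList (w : F.W) (L : List (LExp Λ)) :
    w ∈ (unionList L).den F g ↔ ∃ e ∈ L, w ∈ e.den F g := by
  induction L <;> simp [unionList, den, *]

lemma den_update_of_notMem {E : LExp Λ} {y : ℕ} (hy : y ∉ E.evars) (w : F.W) :
    E.den F (Function.update g y w) = E.den F g := by
  induction E <;> simp_all [den, evars, eq_comm]

end Denotation

structure PosClosed (Q : LExp Λ → Prop) : Prop where
  top : Q .top
  bot : Q .bot
  inter {a b} : Q a → Q b → Q (.inter a b)
  union {a b} : Q a → Q b → Q (.union a b)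
  rinv (l) {a} : Q a → Q (.rinv l a)
  rbox (l) {a} : Q a → Q (.rbox l a)

lemma posClosed_quasiSafe : PosClosed (QuasiSafe (Λ := Λ)) :=
  ⟨.top, .bot, .inter, .union, .rinv, .rbox⟩

lemma posClosed_evars_subset (U : Set ℕ) : PosClosed fun E : LExp Λ => E.evars ⊆ U :=
  ⟨by simp [evars], by simp [evars], Set.union_subset, Set.union_subset, fun _ _ h => h,
    fun _ _ h => h⟩

lemma PosClosed.interList {Q : LExp Λ → Prop} (hQ : PosClosed Q) {L : List (LExp Λ)}
    (hL : ∀ e ∈ L, Q e) : Q (interList L) := by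
  induction L <;> simp_all [LExp.interList, hQ.top, hQ.inter]

lemma PosClosed.unionList {Q : LExp Λ → Prop} (hQ : PosClosed Q) {L : List (LExp Λ)}
    (hL : ∀ e ∈ L, Q e) : Q (_root_.unionList L) := by
  induction L <;> simp_all [_root_.unionList, hQ.bot, hQ.union]

end LExp

theorem List.forall_exists_iff_exists_sections {α : Type*} (p : α → Prop) (L : List (List α)) :
    (∀ c ∈ L, ∃ a ∈ c, p a) ↔ ∃ s ∈ L.sections, ∀ a ∈ s, p a := by
  induction L with
  | nil => simp
  | cons c L ih =>
    simp only [List.mem_cons, forall_eq_or_imp, ih, List.sections, List.mem_flatMap,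
      List.mem_map]
    constructor
    · rintro ⟨⟨a, ha, hpa⟩, s, hs, hps⟩
      exact ⟨a :: s, ⟨s, hs, a, ha, rfl⟩, by simpa [hpa] using hps⟩
    · rintro ⟨_, ⟨s, hs, a, ha, rfl⟩, hps⟩
      simp only [List.mem_cons, forall_eq_or_imp] at hps
      exact ⟨⟨a, ha, hps.1⟩, s, hs, hps.2⟩

theorem List.exists_forall_iff_forall_sections {α : Type*} (p : α → Prop) (L : List (List α)) :
    (∃ c ∈ L, ∀ a ∈ c, p a) ↔ ∀ s ∈ L.sections, ∃ a ∈ s, p a := by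
  simpa using not_congr (forall_exists_iff_exists_sections (fun a => ¬ p a) L)

theorem List.exists_mem_of_mem_sections {α : Type*} {L : List (List α)} {s : List α} {a : α}
    (hs : s ∈ L.sections) (ha : a ∈ s) : ∃ c ∈ L, a ∈ c := by
  induction L generalizing s with
  | nil => simp_all
  | cons c L ih =>
    simp only [List.sections, List.mem_flatMap, List.mem_map] at hs
    obtain ⟨s, hs, b, hb, rfl⟩ := hs
    rcases List.mem_cons.1 ha with rfl | ha
    · exact ⟨c, List.mem_cons_self, hb⟩
    · obtain ⟨c', hc', hac'⟩ := ih hs ha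
      exact ⟨c', List.mem_cons_of_mem _ hc', hac'⟩

namespace KrF

variable {Λ : Type u}

lemma AtomsAll.mono {P Q : LExp Λ → Prop} (hPQ : ∀ E, P E → Q E) {φ : KrF Λ}
    (h : φ.AtomsAll P) : φ.AtomsAll Q := by
  induction φ <;> simp_all [AtomsAll]

lemma atomsAll_evars_subset_of_gKok {U : Set ℕ} {φ : KrF Λ} (h : φ.GKok U true) :
    φ.AtomsAll fun E => E.evars ⊆ U := by
  induction φ <;> simp_all [GKok, AtomsAll]

/-- The pair `(y, E)` stands for the atom `y ∈ E`. -/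
abbrev Atom (Λ : Type u) := ℕ × LExp Λ

def Atom.Holds (F : Frame Λ) (g : ℕ → F.W) (a : Atom Λ) : Prop := g a.1 ∈ a.2.den F g

lemma Atom.holds_update {F : Frame Λ} {g : ℕ → F.W} {a : Atom Λ} {y : ℕ} (hy : y ∉ a.2.evars)
    (w : F.W) :
    Atom.Holds F (Function.update g y w) a ↔
      if a.1 = y then w ∈ a.2.den F g else Atom.Holds F g a := by
  split_ifs with h <;> simp [Atom.Holds, LExp.den_update_of_notMem F g hy, h, Function.update_of_ne]

def exStep (y : ℕ) (l : Λ) (x : ℕ) (c : List (Atom Λ)) : List (Atom Λ) :=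
  (x, .rinv l (LExp.interList ((c.filter (·.1 = y)).map (·.2)))) :: c.filter (·.1 ≠ y)

def allStep (y : ℕ) (l : Λ) (x : ℕ) (c : List (Atom Λ)) : List (Atom Λ) :=
  (x, .rbox l (unionList ((c.filter (·.1 = y)).map (·.2)))) :: c.filter (·.1 ≠ y)

section Steps

variable {F : Frame Λ} {g : ℕ → F.W} {y x : ℕ} {l : Λ} {c : List (Atom Λ)}

lemma forall_holds_update_iff (hc : ∀ a ∈ c, y ∉ a.2.evars) (w : F.W) :
    (∀ a ∈ c, Atom.Holds F (Function.update g y w) a) ↔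
      (∀ a ∈ c, a.1 = y → w ∈ a.2.den F g) ∧ ∀ a ∈ c, a.1 ≠ y → Atom.Holds F g a := by
  grind [Atom.holds_update]

lemma exists_holds_update_iff (hc : ∀ a ∈ c, y ∉ a.2.evars) (w : F.W) :
    (∃ a ∈ c, Atom.Holds F (Function.update g y w) a) ↔
      (∃ a ∈ c, a.1 = y ∧ w ∈ a.2.den F g) ∨ ∃ a ∈ c, a.1 ≠ y ∧ Atom.Holds F g a := by
  grind [Atom.holds_update]

lemma exists_forall_holds_update_iff (hc : ∀ a ∈ c, y ∉ a.2.evars) :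
    (∃ w, F.R l (g x) w ∧ ∀ a ∈ c, Atom.Holds F (Function.update g y w) a) ↔
      ∀ a ∈ exStep y l x c, Atom.Holds F g a := by
  simp only [forall_holds_update_iff hc]
  simp only [exStep, List.mem_cons, forall_eq_or_imp, Atom.Holds, LExp.den, Rinv,
    Set.mem_ofPred_eq, LExp.mem_den_interList, List.mem_map, List.mem_filter]
  grind

lemma forall_exists_holds_update_iff (hc : ∀ a ∈ c, y ∉ a.2.evars) :
    (∀ w, F.R l (g x) w → ∃ a ∈ c, Atom.Holds F (Function.update g y w) a) ↔
      ∃ a ∈ allStep y l x c, Atom.Holds F g a := by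
  simp only [exists_holds_update_iff hc]
  simp only [allStep, List.mem_cons, exists_eq_or_imp, Atom.Holds, LExp.den, RboxOp,
    Set.mem_ofPred_eq, LExp.mem_den_unionList, List.mem_map, List.mem_filter]
  grind

end Steps

/-- Quantifier elimination into DNF; `List.sections` turns a DNF into an equivalent CNF and
back. -/
def elim : KrF Λ → List (List (Atom Λ))
  | atom y E => [[(y, E)]]
  | and a b => (elim a).flatMap fun c => (elim b).map (c ++ ·)
  | or a b => elim a ++ elim b
  | all y l x β => ((elim β).sections.map (allStep y l x)).sections
  | ex y l x β => (elim β).map (exStep y l x)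

lemma elim_atoms {Q : LExp Λ → Prop} (hQ : LExp.PosClosed Q) {φ : KrF Λ} (h : φ.AtomsAll Q) :
    ∀ c ∈ elim φ, ∀ a ∈ c, Q a.2 := by
  induction φ with
  | atom y E => simpa [elim, AtomsAll] using h
  | and a b iha ihb =>
    simp only [elim, List.mem_flatMap, List.mem_map]
    rintro _ ⟨c, hc, d, hd, rfl⟩ e he
    rcases List.mem_append.1 he with he | he
    exacts [iha h.1 c hc e he, ihb h.2 d hd e he]
  | or a b iha ihb =>
    simp only [elim, List.mem_append]
    rintro c (hc | hc)
    exacts [iha h.1 c hc, ihb h.2 c hc]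
  | all y l x β ih =>
    intro c hc a ha
    obtain ⟨_, hd', ha⟩ := List.exists_mem_of_mem_sections hc ha
    obtain ⟨d, hd, rfl⟩ := List.mem_map.1 hd'
    simp only [allStep, List.mem_cons, List.mem_filter] at ha
    rcases ha with rfl | ⟨ha, -⟩
    · refine hQ.rbox l (hQ.unionList ?_)
      simp only [List.mem_map, List.mem_filter]
      rintro _ ⟨b, ⟨hb, -⟩, rfl⟩
      obtain ⟨c', hc', hbc'⟩ := List.exists_mem_of_mem_sections hd hb
      exact ih h c' hc' b hbc'
    · obtain ⟨c', hc', hac'⟩ := List.exists_mem_of_mem_sections hd ha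
      exact ih h c' hc' a hac'
  | ex y l x β ih =>
    simp only [elim, List.mem_map]
    rintro _ ⟨c, hc, rfl⟩ a ha
    simp only [exStep, List.mem_cons, List.mem_filter] at ha
    rcases ha with rfl | ⟨ha, -⟩
    · refine hQ.rinv l (hQ.interList ?_)
      simp only [List.mem_map, List.mem_filter]
      rintro _ ⟨b, ⟨hb, -⟩, rfl⟩
      exact ih h c hc b hb
    · exact ih h c hc a ha

theorem holds_iff_exists_elim {F : Frame Λ} {U : Set ℕ} {φ : KrF Λ}
    (hU : φ.AtomsAll fun E => E.evars ⊆ U) (hbv : Disjoint φ.bv U) (g : ℕ → F.W) :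
    φ.holds F g ↔ ∃ c ∈ elim φ, ∀ a ∈ c, Atom.Holds F g a := by
  induction φ generalizing g with
  | atom y E => simp [holds, elim, Atom.Holds]
  | and a b iha ihb =>
    obtain ⟨hbva, hbvb⟩ := Set.disjoint_union_left.1 hbv
    simp only [holds, iha hU.1 hbva, ihb hU.2 hbvb, elim, List.mem_flatMap, List.mem_map]
    grind
  | or a b iha ihb =>
    obtain ⟨hbva, hbvb⟩ := Set.disjoint_union_left.1 hbv
    simp only [holds, iha hU.1 hbva, ihb hU.2 hbvb, elim, List.mem_append]
    grind
  | all y l x β ih =>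
    obtain ⟨hyU, hbvβ⟩ := Set.disjoint_insert_left.1 hbv
    have hy : ∀ s ∈ (elim β).sections, ∀ a ∈ s, y ∉ a.2.evars := fun s hs a ha hya =>
      have ⟨c, hc, hac⟩ := List.exists_mem_of_mem_sections hs ha
      hyU (elim_atoms (φ := β) (LExp.posClosed_evars_subset U) hU c hc a hac hya)
    calc (all y l x β).holds F g
        ↔ ∀ w, F.R l (g x) w → ∃ c ∈ elim β, ∀ a ∈ c, Atom.Holds F (Function.update g y w) a := by
          simp only [holds, ih hU hbvβ]
      _ ↔ ∀ s ∈ (elim β).sections, ∀ w, F.R l (g x) w →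
            ∃ a ∈ s, Atom.Holds F (Function.update g y w) a := by
          simp only [List.exists_forall_iff_forall_sections]
          grind
      _ ↔ ∀ s ∈ (elim β).sections, ∃ a ∈ allStep y l x s, Atom.Holds F g a :=
          forall₂_congr fun s hs => forall_exists_holds_update_iff (hy s hs)
      _ ↔ ∃ c ∈ elim (all y l x β), ∀ a ∈ c, Atom.Holds F g a := by
          simp only [elim, ← List.forall_exists_iff_exists_sections, List.forall_mem_map]
  | ex y l x β ih =>
    obtain ⟨hyU, hbvβ⟩ := Set.disjoint_insert_left.1 hbv
    have hy : ∀ c ∈ elim β, ∀ a ∈ c, y ∉ a.2.evars := fun c hc a ha hya =>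
      hyU (elim_atoms (φ := β) (LExp.posClosed_evars_subset U) hU c hc a ha hya)
    calc (ex y l x β).holds F g
        ↔ ∃ w, F.R l (g x) w ∧ ∃ c ∈ elim β, ∀ a ∈ c, Atom.Holds F (Function.update g y w) a := by
          simp only [holds, ih hU hbvβ]
      _ ↔ ∃ c ∈ elim β, ∃ w, F.R l (g x) w ∧
            ∀ a ∈ c, Atom.Holds F (Function.update g y w) a := by
          grind
      _ ↔ ∃ c ∈ elim β, ∀ a ∈ exStep y l x c, Atom.Holds F g a :=
          exists_congr fun c => and_congr_right fun hc => exists_forall_holds_update_iff (hy c hc)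
      _ ↔ ∃ c ∈ elim (ex y l x β), ∀ a ∈ c, Atom.Holds F g a := by
          simp [elim]

def ofConj : List (Atom Λ) → KrF Λ
  | [] => atom 0 .top
  | a :: c => and (atom a.1 a.2) (ofConj c)

def ofDNF : List (List (Atom Λ)) → KrF Λ
  | [] => atom 0 .bot
  | c :: D => or (ofConj c) (ofDNF D)

lemma qFree_ofDNF (D : List (List (Atom Λ))) : (ofDNF D).QFree := by
  have qFree_ofConj (c : List (Atom Λ)) : (ofConj c).QFree := by
    induction c <;> simp_all [ofConj, QFree]
  induction D <;> simp_all [ofDNF, QFree]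

lemma atomsAll_ofDNF {Q : LExp Λ → Prop} (hQ : LExp.PosClosed Q) {D : List (List (Atom Λ))}
    (hD : ∀ c ∈ D, ∀ a ∈ c, Q a.2) : (ofDNF D).AtomsAll Q := by
  have atomsAll_ofConj {c : List (Atom Λ)} (hc : ∀ a ∈ c, Q a.2) : (ofConj c).AtomsAll Q := by
    induction c <;> simp_all [ofConj, AtomsAll, hQ.top]
  induction D with
  | nil => exact hQ.bot
  | cons c D ih =>
    simp only [List.mem_cons, forall_eq_or_imp] at hD
    exact ⟨atomsAll_ofConj hD.1, ih hD.2⟩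

lemma holds_ofDNF (F : Frame Λ) (g : ℕ → F.W) (D : List (List (Atom Λ))) :
    (ofDNF D).holds F g ↔ ∃ c ∈ D, ∀ a ∈ c, Atom.Holds F g a := by
  have holds_ofConj (c : List (Atom Λ)) : (ofConj c).holds F g ↔ ∀ a ∈ c, Atom.Holds F g a := by
    induction c <;> simp_all [ofConj, holds, Atom.Holds, LExp.den]
  induction D <;> simp_all [ofDNF, holds, LExp.den]

end KrF

/-- a generalized Kracht formula beginning with an existential restricted
quantifier is equivalent, in every Kripke frame under every assignment of its free
variable, to a quantifier-free formula built from quasi-safe atoms using only `∧` and `∨`. -/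
theorem statement16 {Λ : Type u} (ψ : KrF Λ) (x₀ : ℕ)
    (h₁ : IsGenKracht ψ x₀)
    (h₂ : ∃ (y : ℕ) (l : Λ) (x : ℕ) (β : KrF Λ), ψ = KrF.ex y l x β) :
    ∃ ψ' : KrF Λ, ψ'.QFree ∧ ψ'.AtomsAll QuasiSafe ∧
      ∀ (F : Frame Λ) (g : ℕ → F.W), KrF.holds F g ψ ↔ KrF.holds F g ψ' := by
  obtain ⟨⟨⟨hfv_bv, -⟩, hsafe, hgk⟩, hfv⟩ := h₁
  obtain ⟨y, l, x, β, rfl⟩ := h₂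
  have hatoms : (KrF.ex y l x β).AtomsAll fun E => E.evars ⊆ {x₀} := by
    rw [hfv] at hgk
    exact KrF.atomsAll_evars_subset_of_gKok (φ := KrF.ex y l x β) hgk
  have hbv : Disjoint (KrF.ex y l x β).bv {x₀} := by
    rwa [← hfv, Set.disjoint_iff_inter_eq_empty, Set.inter_comm]
  refine ⟨KrF.ofDNF (KrF.elim (.ex y l x β)), KrF.qFree_ofDNF _,
    KrF.atomsAll_ofDNF LExp.posClosed_quasiSafe
      (KrF.elim_atoms LExp.posClosed_quasiSafe (hsafe.mono fun _ => QuasiSafe.safe)),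
    fun F g => ?_⟩
  rw [KrF.holds_ofDNF, KrF.holds_iff_exists_elim hatoms hbv]
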